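/- arXiv:2011.00576 — 4 statements merged into one kernel-verified Lean document; each statement's English description precedes it below -/
import Mathlib

section
/- There is a universal constant c > 0 with the following property: for every d ≥ 1 and every nonempty finite set Y ⊆ {0,1}^d with ∪_{x∈Y} supp(x) = {1,…,d}, there exists a probability vector λ on Y such that every diagonal entry of A_semi(λ) is positive and (E_η[ max_{x∈Y} x^⊤ A_semi(λ)^{-1/2} η ])² ≤ c · min( d · log|Y| , d² ). (This is the semi-bandit case of the paper's Proposition 3: it shows the worst-case Gaussian width γ̄(A_semi) is at most c · min(d log|X|, d²).) -/
open MeasureTheory ProbabilityTheory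

/-- The standard Gaussian measure `N(0, I_d)` on `ℝ^d`. -/
noncomputable def stdGaussian (d : ℕ) : Measure (Fin d → ℝ) :=
  Measure.pi fun _ => gaussianReal 0 1

/-!
Take for `λ` a maximiser of `∏ᵢ A_semi(λ)ᵢᵢ` over the simplex (a D-optimal design). Moving from
`λ` towards the vertex `x ∈ Y` cannot increase this product, and the derivative of its logarithm
in that direction is `∑ᵢ xᵢ / A_semi(λ)ᵢᵢ - d`; hence every linear form `xᵀ A_semi(λ)^{-1/2} η`
is a centred Gaussian of variance `∑ᵢ xᵢ / A_semi(λ)ᵢᵢ ≤ d`. For `|Y|` centred `d`-sub-Gaussian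
variables, Jensen's inequality for `exp (t · max)` and a union bound on the moment generating
functions give `t · E[max] ≤ log |Y| + d t² / 2`, so `E[max]² ≤ 2 d log |Y|` (take `t = E[max] / d`).
Finally `|Y| ≤ 2 ^ d`, so `log |Y| ≤ d` and the minimum is `d log |Y|`: `c = 2` works.
-/

open Real Finset Matrix
open scoped NNReal

lemma sq_le_of_forall_mul_le {a L c : ℝ} (ha : 0 ≤ a) (hL : 0 ≤ L) (hc : 0 < c)
    (h : ∀ t > 0, t * a ≤ L + c * t ^ 2 / 2) : a ^ 2 ≤ 2 * c * L := by
  rcases ha.eq_or_lt with rfl | ha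
  · rw [zero_pow two_ne_zero]
    positivity
  · have := h (a / c) (by positivity)
    field_simp at this
    nlinarith

namespace ProbabilityTheory

variable {Ω ι : Type*} [MeasurableSpace Ω] {μ : Measure Ω} {X : ι → Ω → ℝ} {c : ℝ≥0}

lemma HasSubgaussianMGF.mono {Y : Ω → ℝ} {c' : ℝ≥0} (h : HasSubgaussianMGF Y c μ)
    (hc : c ≤ c') : HasSubgaussianMGF Y c' μ where
  integrable_exp_mul := h.integrable_exp_mul
  mgf_le t := (h.mgf_le t).trans (by gcongr)

lemma hasSubgaussianMGF_id_gaussianReal (v : ℝ≥0) :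
    HasSubgaussianMGF id v (gaussianReal 0 v) where
  integrable_exp_mul t := integrable_exp_mul_gaussianReal t
  mgf_le t := by simp [mgf_id_gaussianReal]

lemma integrable_finset_sup' {s : Finset ι} (hs : s.Nonempty)
    (hX : ∀ i ∈ s, Integrable (X i) μ) : Integrable (fun ω => s.sup' hs (X · ω)) μ := by
  simpa only [← Finset.sup'_apply] using
    Finset.sup'_induction hs (p := fun f => Integrable f μ) X (fun _ hf _ hg => hf.sup hg) hX

variable [IsProbabilityMeasure μ]

theorem mul_integral_finset_sup'_le_of_hasSubgaussianMGF {s : Finset ι} (hs : s.Nonempty)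
    (hX : ∀ i ∈ s, HasSubgaussianMGF (X i) c μ) {t : ℝ} (ht : 0 < t) :
    t * ∫ ω, s.sup' hs (X · ω) ∂μ ≤ log #s + c * t ^ 2 / 2 := by
  have hexp_sup : ∀ ω, exp (t * s.sup' hs (X · ω)) = s.sup' hs (fun i => exp (t * X i ω)) :=
    fun ω => Finset.apply_sup'_eq_sup'_comp hs (fun r => exp (t * r))
      (fun a b => (exp_monotone.comp (monotone_mul_left_of_nonneg ht.le)).map_sup a b)
  have hint_exp : Integrable (fun ω => exp (t * s.sup' hs (X · ω))) μ := by
    simpa only [hexp_sup] using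
      integrable_finset_sup' hs fun i hi => (hX i hi).integrable_exp_mul t
  have hjensen :
      exp (t * ∫ ω, s.sup' hs (X · ω) ∂μ) ≤ ∫ ω, exp (t * s.sup' hs (X · ω)) ∂μ := by
    rw [← integral_const_mul]
    exact convexOn_exp.map_integral_le continuous_exp.continuousOn isClosed_univ
      (ae_of_all _ fun _ => Set.mem_univ _)
      ((integrable_finset_sup' hs fun i hi => (hX i hi).integrable).const_mul t) hint_exp
  have hunion : ∫ ω, exp (t * s.sup' hs (X · ω)) ∂μ ≤ #s * exp (c * t ^ 2 / 2) := calc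
    _ ≤ ∫ ω, ∑ i ∈ s, exp (t * X i ω) ∂μ := by
      refine integral_mono hint_exp
        (integrable_finsetSum _ fun i hi => (hX i hi).integrable_exp_mul t) fun ω => ?_
      rw [hexp_sup]
      exact Finset.sup'_le _ _ fun i hi =>
        Finset.single_le_sum (f := fun i => exp (t * X i ω)) (fun _ _ => (exp_pos _).le) hi
    _ = ∑ i ∈ s, mgf (X i) μ t :=
      integral_finsetSum _ fun i hi => (hX i hi).integrable_exp_mul t
    _ ≤ ∑ _i ∈ s, exp (c * t ^ 2 / 2) := Finset.sum_le_sum fun i hi => (hX i hi).mgf_le t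
    _ = #s * exp (c * t ^ 2 / 2) := by rw [Finset.sum_const, nsmul_eq_mul]
  have hcard : (0 : ℝ) < #s := by exact_mod_cast hs.card_pos
  rw [← exp_le_exp, exp_add, exp_log hcard]
  exact hjensen.trans hunion

theorem sq_integral_finset_sup'_le_of_hasSubgaussianMGF {s : Finset ι} (hs : s.Nonempty)
    (hX : ∀ i ∈ s, HasSubgaussianMGF (X i) c μ) (hmean : ∀ i ∈ s, ∫ ω, X i ω ∂μ = 0)
    (hc : 0 < c) :
    (∫ ω, s.sup' hs (X · ω) ∂μ) ^ 2 ≤ 2 * c * log #s := by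
  have ⟨i, hi⟩ := hs
  have hnonneg : 0 ≤ ∫ ω, s.sup' hs (X · ω) ∂μ := by
    rw [← hmean i hi]
    exact integral_mono (hX i hi).integrable
      (integrable_finset_sup' hs fun j hj => (hX j hj).integrable) fun ω => s.le_sup' (X · ω) hi
  exact sq_le_of_forall_mul_le hnonneg (log_natCast_nonneg _) hc fun t ht =>
    mul_integral_finset_sup'_le_of_hasSubgaussianMGF hs hX ht

end ProbabilityTheory

section StdGaussian

variable {d : ℕ}

instance isProbabilityMeasure_stdGaussian : IsProbabilityMeasure (stdGaussian d) := by
  unfold _root_.stdGaussian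
  infer_instance

lemma stdGaussian_map_eval (i : Fin d) :
    (stdGaussian d).map (fun η => η i) = gaussianReal 0 1 :=
  (measurePreserving_eval (fun _ => gaussianReal 0 1) i).map_eq

lemma integral_eval_stdGaussian (i : Fin d) : ∫ η, η i ∂stdGaussian d = 0 := calc
  ∫ η, η i ∂stdGaussian d = ∫ x, x ∂(stdGaussian d).map (fun η => η i) :=
      (integral_map (μ := stdGaussian d) (φ := fun η => η i) (f := fun x => x)
        (measurable_pi_apply i).aemeasurable aestronglyMeasurable_id).symm
  _ = 0 := by rw [stdGaussian_map_eval, integral_id_gaussianReal]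

lemma hasSubgaussianMGF_eval_stdGaussian (i : Fin d) :
    HasSubgaussianMGF (fun η => η i) 1 (stdGaussian d) := by
  rw [← HasSubgaussianMGF.id_map_iff (measurable_pi_apply i).aemeasurable, stdGaussian_map_eval]
  exact hasSubgaussianMGF_id_gaussianReal 1

lemma integral_sum_mul_stdGaussian (b : Fin d → ℝ) :
    ∫ η, ∑ i, b i * η i ∂stdGaussian d = 0 := by
  rw [integral_finsetSum _ fun i _ =>
    (hasSubgaussianMGF_eval_stdGaussian i).integrable.const_mul _]
  simp [integral_const_mul, integral_eval_stdGaussian]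

lemma hasSubgaussianMGF_sum_mul_stdGaussian (b : Fin d → ℝ) {c : ℝ≥0}
    (hb : ∑ i, b i ^ 2 ≤ c) :
    HasSubgaussianMGF (fun η => ∑ i, b i * η i) c (stdGaussian d) := by
  have hindep : iIndepFun (fun i (η : Fin d → ℝ) => b i * η i) (stdGaussian d) :=
    iIndepFun_pi (X := fun i x => b i * x) fun _ => (measurable_const_mul _).aemeasurable
  refine (HasSubgaussianMGF.sum_of_iIndepFun hindep (s := univ)
    fun i _ => (hasSubgaussianMGF_eval_stdGaussian i).const_mul (b i)).mono ?_
  rw [← NNReal.coe_le_coe, NNReal.coe_sum]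
  exact le_of_eq_of_le (Finset.sum_congr rfl fun i _ => mul_one _) hb

end StdGaussian

lemma HasDerivAt.nonpos_of_forall_Ioo_le {f : ℝ → ℝ} {f' a b : ℝ} (hf : HasDerivAt f f' a)
    (hab : a < b) (hmax : ∀ s ∈ Set.Ioo a b, f s ≤ f a) : f' ≤ 0 := by
  refine le_of_tendsto ((hasDerivAt_iff_tendsto_slope.mp hf).mono_left (nhdsGT_le_nhdsNE a)) ?_
  filter_upwards [Ioo_mem_nhdsGT hab] with s hs
  rw [slope_def_field]
  exact div_nonpos_of_nonpos_of_nonneg (by linarith [hmax s hs]) (by linarith [hs.1])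

section Design

variable {ι κ : Type*} [Fintype ι] {X : Matrix ι κ ℝ}

lemma vecMul_pos_of_pos {w : ι → ℝ} (hw : ∀ j, 0 < w j) (hX : ∀ j k, 0 ≤ X j k) {k : κ}
    (hk : ∃ j, 0 < X j k) : 0 < (w ᵥ* X) k := by
  obtain ⟨j, hj⟩ := hk
  exact (mul_pos (hw j) hj).trans_le <| Finset.single_le_sum
    (f := fun j => w j * X j k) (fun j _ => mul_nonneg (hw j).le (hX j k)) (Finset.mem_univ j)

lemma vecMul_nonneg_of_mem_stdSimplex {w : ι → ℝ} (hw : w ∈ stdSimplex ℝ ι)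
    (hX : ∀ j k, 0 ≤ X j k) (k : κ) : 0 ≤ (w ᵥ* X) k :=
  Finset.sum_nonneg fun j _ => mul_nonneg (hw.1 j) (hX j k)

variable [Fintype κ]

theorem sum_div_vecMul_le_card_of_isMaxOn {v : ι → ℝ} (hv : v ∈ stdSimplex ℝ ι)
    (hX : ∀ j k, 0 ≤ X j k) (hmax : IsMaxOn (fun w => ∏ k, (w ᵥ* X) k) (stdSimplex ℝ ι) v)
    (hpos : ∀ k, 0 < (v ᵥ* X) k) (j : ι) :
    ∑ k, X j k / (v ᵥ* X) k ≤ Fintype.card κ := by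
  classical
  set a := v ᵥ* X
  -- the logarithm of the objective along the segment from `v` towards the vertex `j`
  let φ : ℝ → ℝ := fun s => ∑ k, log (a k + s * (X j k - a k))
  have hderiv : HasDerivAt φ (∑ k, (X j k - a k) / a k) 0 := by
    refine HasDerivAt.fun_sum fun k _ => ?_
    simpa using (((hasDerivAt_id (0 : ℝ)).mul_const (X j k - a k)).const_add (a k)).log
      (by simpa using (hpos k).ne')
  have hle : ∀ s ∈ Set.Ioo (0 : ℝ) 1, φ s ≤ φ 0 := by
    intro s hs
    have hseg : ((1 - s) • v + s • Pi.single j 1) ᵥ* X = fun k => a k + s * (X j k - a k) := by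
      ext k
      simp only [add_vecMul, smul_vecMul, single_one_vecMul, Pi.add_apply, Pi.smul_apply,
        smul_eq_mul, row_apply, a]
      ring
    have hseg_mem : (1 - s) • v + s • Pi.single j 1 ∈ stdSimplex ℝ ι :=
      convex_stdSimplex ℝ ι hv (single_mem_stdSimplex ℝ j) (by linarith [hs.2]) hs.1.le
        (by ring)
    have hseg_pos : ∀ k, 0 < a k + s * (X j k - a k) := fun k => by
      nlinarith [hpos k, hX j k, hs.1, hs.2, mul_nonneg hs.1.le (hX j k)]
    calc φ s = log (∏ k, (a k + s * (X j k - a k))) :=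
          (log_prod fun k _ => (hseg_pos k).ne').symm
      _ ≤ log (∏ k, a k) := by
          refine log_le_log (prod_pos fun k _ => hseg_pos k) ?_
          have h : ∏ k, (((1 - s) • v + s • Pi.single j 1) ᵥ* X) k ≤ ∏ k, a k :=
            hmax hseg_mem
          rwa [hseg] at h
      _ = φ 0 := by simp [φ, log_prod fun k _ => (hpos k).ne']
  have hsum : ∑ k, (X j k - a k) / a k = ∑ k, X j k / a k - Fintype.card κ := by
    simp [sub_div, div_self (hpos _).ne', Finset.sum_sub_distrib]
  linarith [hderiv.nonpos_of_forall_Ioo_le one_pos hle]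

theorem exists_mem_stdSimplex_sum_div_vecMul_le_card [Nonempty ι] (hX : ∀ j k, 0 ≤ X j k)
    (hcov : ∀ k, ∃ j, 0 < X j k) :
    ∃ w ∈ stdSimplex ℝ ι,
      (∀ k, 0 < (w ᵥ* X) k) ∧ ∀ j, ∑ k, X j k / (w ᵥ* X) k ≤ Fintype.card κ := by
  classical
  have hcont : Continuous fun w : ι → ℝ => ∏ k, (w ᵥ* X) k := by fun_prop
  obtain ⟨v, hv, hmax⟩ := (isCompact_stdSimplex ℝ ι).exists_isMaxOn
    ⟨_, single_mem_stdSimplex ℝ (Classical.arbitrary ι)⟩ hcont.continuousOn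
  have hu : (fun _ => (Fintype.card ι : ℝ)⁻¹) ∈ stdSimplex ℝ ι :=
    ⟨fun _ => by positivity, by simp [Fintype.card_ne_zero]⟩
  have hprod_pos : 0 < ∏ k, (v ᵥ* X) k :=
    (prod_pos fun k _ => vecMul_pos_of_pos (fun _ => by positivity) hX (hcov k)).trans_le
      (hmax hu)
  have hpos : ∀ k, 0 < (v ᵥ* X) k := fun k =>
    (vecMul_nonneg_of_mem_stdSimplex hv hX k).lt_of_ne
      ((prod_ne_zero_iff.mp hprod_pos.ne') k (mem_univ k)).symm
  exact ⟨v, hv, hpos, sum_div_vecMul_le_card_of_isMaxOn hv hX hmax hpos⟩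

theorem exists_weights_sum_div_le_card (Y : Finset (κ → ℝ)) (hY : Y.Nonempty)
    (hnonneg : ∀ x ∈ Y, ∀ k, 0 ≤ x k) (hcov : ∀ k, ∃ x ∈ Y, 0 < x k) :
    ∃ w : (κ → ℝ) → ℝ, (∀ x ∈ Y, 0 ≤ w x) ∧ ∑ x ∈ Y, w x = 1 ∧
      (∀ k, 0 < ∑ y ∈ Y, w y * y k) ∧
      ∀ x ∈ Y, ∑ k, x k / ∑ y ∈ Y, w y * y k ≤ Fintype.card κ := by
  have : Nonempty Y := hY.to_subtype
  obtain ⟨v, hv, hpos, hbound⟩ := exists_mem_stdSimplex_sum_div_vecMul_le_card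
    (X := fun (x : Y) k => (x : κ → ℝ) k) (fun x k => hnonneg x x.2 k)
    (fun k => let ⟨x, hx, h⟩ := hcov k; ⟨⟨x, hx⟩, h⟩)
  let w : (κ → ℝ) → ℝ := Function.extend Subtype.val v 0
  have hw : ∀ x : Y, w x = v x := Subtype.val_injective.extend_apply v 0
  have hsum : ∀ f : (κ → ℝ) → ℝ, ∑ y ∈ Y, w y * f y = ∑ y : Y, v y * f y := fun f => by
    simp only [← Finset.sum_coe_sort Y, hw]
  refine ⟨w, fun x hx => hw ⟨x, hx⟩ ▸ hv.1 _, ?_, fun k => hsum _ ▸ hpos k, fun x hx => ?_⟩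
  · simpa [← Finset.sum_coe_sort Y, hw] using hv.2
  · simp only [hsum]
    exact hbound ⟨x, hx⟩

end Design

lemma log_card_le_card_of_binary {κ : Type*} [Fintype κ] (Y : Finset (κ → ℝ))
    (h01 : ∀ x ∈ Y, ∀ k, x k = 0 ∨ x k = 1) : log #Y ≤ Fintype.card κ := by
  classical
  have hsub : Y ⊆ Fintype.piFinset fun _ => ({0, 1} : Finset ℝ) := fun x hx =>
    Fintype.mem_piFinset.mpr fun k => by simpa using h01 x hx k
  have hcard : (#Y : ℝ) ≤ 2 ^ Fintype.card κ := by
    exact_mod_cast (Finset.card_le_card hsub).trans (by simp)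
  rcases Y.eq_empty_or_nonempty with rfl | hY
  · simp
  calc log #Y ≤ log (2 ^ Fintype.card κ) := log_le_log (by exact_mod_cast hY.card_pos) hcard
    _ = Fintype.card κ * log 2 := by rw [log_pow]
    _ ≤ Fintype.card κ :=
      mul_le_of_le_one_right (Nat.cast_nonneg _) (log_two_lt_d9.le.trans (by norm_num))

/-- **Proposition 3 (semi-bandit case).** There is a universal constant `c > 0` such that
for every `d ≥ 1` and every nonempty finite `Y ⊆ {0,1}^d` covering all coordinates, there
is a probability vector `w` on `Y` whose diagonal design `A_semi(w)` has positive diagonal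
entries and whose squared Gaussian width
`(E_η[ max_{x∈Y} xᵀ A_semi(w)^{-1/2} η ])²` is at most `c · min(d log|Y|, d²)`. -/
theorem gaussian_width_semi_le_min_dlog_dsq :
    ∃ c : ℝ, 0 < c ∧
      ∀ (d : ℕ), 1 ≤ d →
      ∀ (Y : Finset (Fin d → ℝ)) (hY : Y.Nonempty),
        (∀ x ∈ Y, ∀ i, x i = 0 ∨ x i = 1) →
        (∀ i : Fin d, ∃ x ∈ Y, x i = 1) →
        ∃ w : (Fin d → ℝ) → ℝ,
          (∀ x ∈ Y, 0 ≤ w x) ∧ (∑ x ∈ Y, w x = 1) ∧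
          (∀ i : Fin d, 0 < ∑ x ∈ Y, w x * x i) ∧
          (∫ η, Y.sup' hY
              (fun x => ∑ i, x i * η i / Real.sqrt (∑ y ∈ Y, w y * y i))
              ∂ stdGaussian d) ^ 2
            ≤ c * min ((d : ℝ) * Real.log (Y.card)) ((d : ℝ) ^ 2) := by
  refine ⟨2, two_pos, fun d hd Y hY h01 hcov => ?_⟩
  obtain ⟨w, hw0, hw1, hpos, hbound⟩ := exists_weights_sum_div_le_card Y hY
    (fun x hx i => by rcases h01 x hx i with h | h <;> simp [h])
    (fun i => let ⟨x, hx, h⟩ := hcov i; ⟨x, hx, h ▸ one_pos⟩)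
  refine ⟨w, hw0, hw1, hpos, ?_⟩
  set A := fun i => ∑ y ∈ Y, w y * y i
  have hA : ∀ i, 0 < A i := hpos
  have hform : ∀ x : Fin d → ℝ, (fun η : Fin d → ℝ => ∑ i, x i * η i / sqrt (A i))
      = fun η => ∑ i, x i / sqrt (A i) * η i := fun x => by
    simp only [mul_div_right_comm]
  have hsubG : ∀ x ∈ Y, HasSubgaussianMGF
      (fun η => ∑ i, x i * η i / sqrt (A i)) d (stdGaussian d) := fun x hx => by
    refine hform x ▸ hasSubgaussianMGF_sum_mul_stdGaussian _ ?_
    calc ∑ i, (x i / sqrt (A i)) ^ 2 = ∑ i, x i / A i := sum_congr rfl fun i _ => by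
          rw [div_pow, sq_sqrt (hA i).le]
          rcases h01 x hx i with h | h <;> simp [h]
      _ ≤ d := by simpa using hbound x hx
  have hmean : ∀ x ∈ Y, ∫ η, ∑ i, x i * η i / sqrt (A i) ∂stdGaussian d = 0 :=
    fun x _ => hform x ▸ integral_sum_mul_stdGaussian _
  have hlog : log #Y ≤ d := by simpa using log_card_le_card_of_binary Y h01
  calc _ ≤ 2 * (d : ℝ≥0) * log #Y :=
        sq_integral_finset_sup'_le_of_hasSubgaussianMGF hY hsubG hmean (by exact_mod_cast hd)
    _ = 2 * min (d * log #Y) (d ^ 2) := by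
        rw [min_eq_left (by nlinarith), NNReal.coe_natCast, mul_assoc]
end

section
/- There is a universal constant c > 0 such that for every d ≥ 3, every integer 1 ≤ k ≤ d, and every set Y with 1_d ∈ Y ⊆ { x ∈ {0,1}^d : ‖x‖₁ = k } ∪ { 1_d } (where 1_d is the all-ones vector), one has (E_η[ max_{x∈Y} x^⊤ η ])² ≤ c · ( k² · log d + d ). In particular, since A_semi of the point mass at 1_d equals the identity matrix and 1_d is the unique-or-tied optimal arm whenever θ* has nonnegative coordinates, taking k = ⌈√d⌉ yields a combinatorial semi-bandit instance in ℝ^d with k = ⌈√d⌉ whose worst-case Gaussian width γ̄(A_semi) is at most c′ · d · log d (the paper's Proposition 5). -/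
open MeasureTheory ProbabilityTheory

/-!
Adding `0` to two arm sets makes the Gaussian width subadditive under their union, so `Y` is
split into `{0, 1_d}` and `{0} ∪ {k-sparse binary vectors}`. Each piece is bounded by the
Gaussian maximal inequality `E max_{x ∈ Z} xᵀη ≤ log |Z| / t + t · max_{x ∈ Z} ‖x‖² / 2`
(Jensen for `exp` and the Gaussian moment generating function): `t = 1/√d` gives `O(√d)` for the
first piece, and `t = √(log d)` with `|Z| ≤ d^k + 1` gives `O(k √(log d))` for the second.
For the second conjunct, the point mass at `1_d` has `A_semi = I`, so the normalised width is the
plain width, and `⌈√d⌉² ≤ 4d`.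
-/

open Real Finset

lemma exp_integral_le_integral_exp {α : Type*} [MeasurableSpace α] {μ : Measure α}
    [IsProbabilityMeasure μ] {f : α → ℝ} (hf : Integrable f μ)
    (hexp : Integrable (fun a => exp (f a)) μ) :
    exp (∫ a, f a ∂μ) ≤ ∫ a, exp (f a) ∂μ :=
  convexOn_exp.map_integral_le continuous_exp.continuousOn isClosed_univ
    (.of_forall fun _ => Set.mem_univ _) hf hexp

lemma MeasureTheory.Integrable.finset_sup' {α ι : Type*} [MeasurableSpace α] {μ : Measure α}
    {s : Finset ι} (hs : s.Nonempty) {f : ι → α → ℝ} (hf : ∀ i ∈ s, Integrable (f i) μ) :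
    Integrable (s.sup' hs f) μ :=
  Finset.sup'_induction (p := (Integrable · μ)) hs f (fun _ hf _ hg => hf.sup hg) hf

section StdGaussian

variable {d : ℕ}

instance : IsProbabilityMeasure (stdGaussian d) := by
  unfold _root_.stdGaussian; infer_instance

lemma integral_exp_mul_gaussianReal (μ : ℝ) (v : NNReal) (t : ℝ) :
    ∫ x, exp (t * x) ∂gaussianReal μ v = exp (μ * t + v * t ^ 2 / 2) :=
  congrFun mgf_fun_id_gaussianReal t

lemma integrable_eval_stdGaussian (i : Fin d) :
    Integrable (fun η => η i) (stdGaussian d) :=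
  integrable_eval ((memLp_id_gaussianReal 1).integrable le_rfl)

lemma integrable_dotProduct_stdGaussian (x : Fin d → ℝ) :
    Integrable (fun η => x ⬝ᵥ η) (stdGaussian d) :=
  integrable_finsetSum _ fun i _ => (integrable_eval_stdGaussian i).const_mul (x i)

lemma integral_dotProduct_stdGaussian (x : Fin d → ℝ) :
    ∫ η, x ⬝ᵥ η ∂stdGaussian d = 0 := by
  simp only [dotProduct]
  rw [integral_finsetSum _ fun i _ => (integrable_eval_stdGaussian i).const_mul (x i)]
  simp [integral_const_mul, _root_.stdGaussian, integral_eval]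

lemma exp_dotProduct_eq_prod (x η : Fin d → ℝ) :
    exp (x ⬝ᵥ η) = ∏ i, exp (x i * η i) :=
  exp_sum _ _

lemma integrable_exp_dotProduct_stdGaussian (x : Fin d → ℝ) :
    Integrable (fun η => exp (x ⬝ᵥ η)) (stdGaussian d) := by
  simp_rw [exp_dotProduct_eq_prod]
  exact Integrable.fintype_prod fun i => integrable_exp_mul_gaussianReal (x i)

lemma integral_exp_dotProduct_stdGaussian (x : Fin d → ℝ) :
    ∫ η, exp (x ⬝ᵥ η) ∂stdGaussian d = exp (x ⬝ᵥ x / 2) := by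
  simp_rw [exp_dotProduct_eq_prod]
  rw [_root_.stdGaussian, integral_fintype_prod_eq_prod (fun i s => exp (x i * s))]
  simp_rw [integral_exp_mul_gaussianReal, zero_mul, zero_add, NNReal.coe_one, one_mul, ← exp_sum,
    dotProduct, sum_div, sq]

end StdGaussian

section GaussianWidth

variable {d : ℕ}

noncomputable def gaussianWidth (Y : Finset (Fin d → ℝ)) (hY : Y.Nonempty) : ℝ :=
  ∫ η, Y.sup' hY (· ⬝ᵥ η) ∂stdGaussian d

lemma integrable_sup'_dotProduct_stdGaussian (Y : Finset (Fin d → ℝ)) (hY : Y.Nonempty) :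
    Integrable (fun η => Y.sup' hY (· ⬝ᵥ η)) (stdGaussian d) := by
  simpa only [← Finset.sup'_apply] using
    Integrable.finset_sup' hY fun x _ => integrable_dotProduct_stdGaussian x

lemma gaussianWidth_nonneg {Y : Finset (Fin d → ℝ)} (hY : Y.Nonempty) :
    0 ≤ gaussianWidth Y hY := by
  obtain ⟨x, hx⟩ := hY
  calc 0 = ∫ η, x ⬝ᵥ η ∂stdGaussian d := (integral_dotProduct_stdGaussian x).symm
    _ ≤ gaussianWidth Y ⟨x, hx⟩ :=
      integral_mono (integrable_dotProduct_stdGaussian x)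
        (integrable_sup'_dotProduct_stdGaussian Y _) fun η => le_sup' (· ⬝ᵥ η) hx

lemma gaussianWidth_mono {Y Z : Finset (Fin d → ℝ)} (hY : Y.Nonempty) (hYZ : Y ⊆ Z) :
    gaussianWidth Y hY ≤ gaussianWidth Z (hY.mono hYZ) :=
  integral_mono (integrable_sup'_dotProduct_stdGaussian Y _)
    (integrable_sup'_dotProduct_stdGaussian Z _) fun _ => sup'_mono _ hYZ hY

lemma gaussianWidth_union_le {A B : Finset (Fin d → ℝ)} (hA : 0 ∈ A) (hB : 0 ∈ B) :
    gaussianWidth (A ∪ B) ⟨0, mem_union_left B hA⟩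
      ≤ gaussianWidth A ⟨0, hA⟩ + gaussianWidth B ⟨0, hB⟩ := by
  have hAi := integrable_sup'_dotProduct_stdGaussian A ⟨0, hA⟩
  have hBi := integrable_sup'_dotProduct_stdGaussian B ⟨0, hB⟩
  refine (integral_mono (integrable_sup'_dotProduct_stdGaussian _ _) (hAi.add hBi)
    fun η => sup'_le _ _ fun x hx => ?_).trans_eq (integral_add hAi hBi)
  rw [Pi.add_apply]
  have hA0 : 0 ≤ A.sup' ⟨0, hA⟩ (· ⬝ᵥ η) := by simpa using le_sup' (· ⬝ᵥ η) hA
  have hB0 : 0 ≤ B.sup' ⟨0, hB⟩ (· ⬝ᵥ η) := by simpa using le_sup' (· ⬝ᵥ η) hB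
  rcases mem_union.1 hx with hx | hx
  · linarith [le_sup' (· ⬝ᵥ η) hx]
  · linarith [le_sup' (· ⬝ᵥ η) hx]

lemma gaussianWidth_le_log_card_div_add {Y : Finset (Fin d → ℝ)} (hY : Y.Nonempty) {s t : ℝ}
    (ht : 0 < t) (hs : ∀ x ∈ Y, x ⬝ᵥ x ≤ s) :
    gaussianWidth Y hY ≤ log #Y / t + t * s / 2 := by
  set M := fun η => Y.sup' hY (· ⬝ᵥ η)
  have hM : Integrable M (stdGaussian d) := integrable_sup'_dotProduct_stdGaussian Y hY
  have hexp_le : ∀ η, exp (t * M η) ≤ ∑ x ∈ Y, exp ((t • x) ⬝ᵥ η) := fun η => by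
    obtain ⟨x, hx, hMx⟩ := exists_mem_eq_sup' hY (· ⬝ᵥ η)
    rw [show M η = x ⬝ᵥ η from hMx, ← smul_eq_mul, ← smul_dotProduct]
    exact single_le_sum (f := fun y => exp ((t • y) ⬝ᵥ η)) (fun y _ => (exp_pos _).le) hx
  have hsum : Integrable (fun η => ∑ x ∈ Y, exp ((t • x) ⬝ᵥ η)) (stdGaussian d) :=
    integrable_finsetSum _ fun x _ => integrable_exp_dotProduct_stdGaussian _
  have hexp : Integrable (fun η => exp (t * M η)) (stdGaussian d) :=
    hsum.mono' (continuous_exp.comp_aestronglyMeasurable (hM.const_mul t).aestronglyMeasurable)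
      (.of_forall fun η => (norm_of_nonneg (exp_pos _).le).trans_le (hexp_le η))
  have hexp_width : exp (t * gaussianWidth Y hY) ≤ #Y * exp (t ^ 2 * s / 2) := calc
    exp (t * gaussianWidth Y hY) = exp (∫ η, t * M η ∂stdGaussian d) := by
      rw [gaussianWidth, integral_const_mul]
    _ ≤ ∫ η, exp (t * M η) ∂stdGaussian d := exp_integral_le_integral_exp (hM.const_mul t) hexp
    _ ≤ ∫ η, ∑ x ∈ Y, exp ((t • x) ⬝ᵥ η) ∂stdGaussian d := integral_mono hexp hsum hexp_le
    _ = ∑ x ∈ Y, exp (t ^ 2 * (x ⬝ᵥ x) / 2) := by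
      rw [integral_finsetSum _ fun x _ => integrable_exp_dotProduct_stdGaussian _]
      refine sum_congr rfl fun x _ => ?_
      rw [integral_exp_dotProduct_stdGaussian, smul_dotProduct, dotProduct_smul, smul_eq_mul,
        smul_eq_mul]
      ring_nf
    _ ≤ ∑ _x ∈ Y, exp (t ^ 2 * s / 2) := sum_le_sum fun x hx => by gcongr; exact hs x hx
    _ = #Y * exp (t ^ 2 * s / 2) := by rw [sum_const, nsmul_eq_mul]
  have hlog : t * gaussianWidth Y hY ≤ log #Y + t ^ 2 * s / 2 := by
    rwa [← log_exp (t ^ 2 * s / 2), ← log_mul (by simpa using hY.ne_empty) (exp_pos _).ne',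
      le_log_iff_exp_le (by have := hY.card_pos; positivity)]
  rw [div_add' _ _ _ ht.ne', le_div_iff₀ ht]
  nlinarith

end GaussianWidth

lemma card_le_pow_of_forall_binary_sum_eq {ι : Type*} [Fintype ι] {k : ℕ} (Z : Finset (ι → ℝ))
    (hZ : ∀ x ∈ Z, (∀ i, x i = 0 ∨ x i = 1) ∧ ∑ i, x i = k) :
    #Z ≤ Fintype.card ι ^ k := by
  classical
  have hsub : Z ⊆ (powersetCard k univ).image
      fun s : Finset ι => fun i => if i ∈ s then 1 else 0 := by
    intro x hx
    obtain ⟨hbin, hsum⟩ := hZ x hx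
    have hx_eq : (fun i => if i ∈ univ.filter (x · = 1) then (1 : ℝ) else 0) = x :=
      funext fun i => by rcases hbin i with h | h <;> simp [h]
    refine mem_image.2 ⟨_, mem_powersetCard_univ.2 ?_, hx_eq⟩
    rw [← hx_eq, sum_boole] at hsum
    simpa using hsum
  calc #Z ≤ #((powersetCard k univ).image _) := card_le_card hsub
    _ ≤ #(powersetCard k (univ : Finset ι)) := card_image_le
    _ = (Fintype.card ι).choose k := by rw [card_powersetCard, card_univ]
    _ ≤ Fintype.card ι ^ k := Nat.choose_le_pow _ _

lemma dotProduct_self_eq_sum_of_binary {ι : Type*} [Fintype ι] {x : ι → ℝ}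
    (hx : ∀ i, x i = 0 ∨ x i = 1) : x ⬝ᵥ x = ∑ i, x i :=
  sum_congr rfl fun i _ => by rcases hx i with h | h <;> simp [h]

lemma gaussianWidth_le_of_forall_topK_or_allOnes {d k : ℕ} (hd : 2 ≤ d) (hk : 1 ≤ k)
    {Y : Finset (Fin d → ℝ)} (hY : Y.Nonempty)
    (hYk : ∀ x ∈ Y, ((∀ i, x i = 0 ∨ x i = 1) ∧ ∑ i, x i = k) ∨ x = 1) :
    gaussianWidth Y hY ≤ 2 * √d + 3 * k * √(log d) := by
  classical
  set Z := Y.erase 1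
  have hd' : (2 : ℝ) ≤ d := by exact_mod_cast hd
  have hlog : 0 < log d := log_pos (by linarith)
  have hsqrt : 0 < √(d : ℝ) := by positivity
  have hpair : gaussianWidth {0, 1} (insert_nonempty _ _) ≤ 2 * √d := calc
    _ ≤ log #({0, 1} : Finset (Fin d → ℝ)) / (√d)⁻¹ + (√d)⁻¹ * d / 2 :=
      gaussianWidth_le_log_card_div_add _ (inv_pos.2 hsqrt) (by simp)
    _ ≤ log 2 / (√d)⁻¹ + (√d)⁻¹ * d / 2 := by
      gcongr
      exact_mod_cast card_le_two
    _ = (log 2 + 1 / 2) * √d := by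
      field_simp
      rw [sq_sqrt (by positivity)]
      ring
    _ ≤ 2 * √d := by gcongr; linarith [log_two_lt_d9]
  have htopK : gaussianWidth (insert 0 Z) (insert_nonempty _ _) ≤ 3 * k * √(log d) := by
    have hbin : ∀ x ∈ Z, (∀ i, x i = 0 ∨ x i = 1) ∧ ∑ i, x i = k := fun x hx =>
      (hYk x (mem_of_mem_erase hx)).resolve_right (ne_of_mem_erase hx)
    have hcard : #(insert 0 Z) ≤ d ^ (2 * k) := by
      have hZ := card_le_pow_of_forall_binary_sum_eq Z hbin
      rw [Fintype.card_fin] at hZ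
      have hdk : 2 ≤ d ^ k := hd.trans (Nat.le_self_pow (by omega) d)
      rw [mul_comm, pow_mul, sq]
      nlinarith [card_insert_le 0 Z]
    have hnorm : ∀ x ∈ insert 0 Z, x ⬝ᵥ x ≤ k := by
      intro x hx
      rcases mem_insert.1 hx with rfl | hx
      · simp
      · rw [dotProduct_self_eq_sum_of_binary (hbin x hx).1, (hbin x hx).2]
    calc _ ≤ log #(insert 0 Z) / √(log d) + √(log d) * k / 2 :=
          gaussianWidth_le_log_card_div_add _ (sqrt_pos.2 hlog) hnorm
      _ ≤ log ((d : ℝ) ^ (2 * k)) / √(log d) + √(log d) * k / 2 := by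
          gcongr
          exact_mod_cast hcard
      _ = (5 / 2) * k * √(log d) := by
          rw [log_pow, mul_div_assoc, div_sqrt]
          push_cast
          ring
      _ ≤ 3 * k * √(log d) := by gcongr; norm_num
  have hsplit : Y ⊆ {0, 1} ∪ insert 0 Z := fun x hx => by
    by_cases h : x = 1
    · simp [h]
    · exact mem_union_right _ (mem_insert_of_mem (mem_erase.2 ⟨h, hx⟩))
  calc gaussianWidth Y hY ≤ gaussianWidth ({0, 1} ∪ insert 0 Z) _ := gaussianWidth_mono hY hsplit
    _ ≤ _ := gaussianWidth_union_le (mem_insert_self _ _) (mem_insert_self _ _)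
    _ ≤ 2 * √d + 3 * k * √(log d) := add_le_add hpair htopK

lemma sq_gaussianWidth_le_of_forall_topK_or_allOnes {d k : ℕ} (hd : 2 ≤ d) (hk : 1 ≤ k)
    {Y : Finset (Fin d → ℝ)} (h1 : 1 ∈ Y)
    (hYk : ∀ x ∈ Y, ((∀ i, x i = 0 ∨ x i = 1) ∧ ∑ i, x i = k) ∨ x = 1) :
    gaussianWidth Y ⟨1, h1⟩ ^ 2 ≤ 18 * ((k : ℝ) ^ 2 * log d + d) := by
  have hlog : 0 ≤ log d := log_nonneg (by exact_mod_cast (show 1 ≤ d by omega))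
  have hw := gaussianWidth_le_of_forall_topK_or_allOnes hd hk ⟨1, h1⟩ hYk
  calc gaussianWidth Y ⟨1, h1⟩ ^ 2 ≤ (2 * √d + 3 * k * √(log d)) ^ 2 :=
        pow_le_pow_left₀ (gaussianWidth_nonneg _) hw 2
    _ ≤ 8 * √d ^ 2 + 18 * k ^ 2 * √(log d) ^ 2 := by
        nlinarith [sq_nonneg (2 * √d - 3 * k * √(log d))]
    _ = 18 * ((k : ℝ) ^ 2 * log d + d) - 10 * d := by
        rw [sq_sqrt (Nat.cast_nonneg d), sq_sqrt hlog]
        ring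
    _ ≤ 18 * ((k : ℝ) ^ 2 * log d + d) := by linarith [(Nat.cast_nonneg d : (0 : ℝ) ≤ d)]

lemma setOf_binary_finite {ι : Type*} [Finite ι] :
    {x : ι → ℝ | ∀ i, x i = 0 ∨ x i = 1}.Finite := by
  convert Set.Finite.pi (t := fun _ : ι => ({0, 1} : Set ℝ)) fun _ => by simp
  ext x
  simp

lemma natCeil_sqrt_sq_mul_log_add_le {d : ℕ} (hd : 3 ≤ d) :
    (⌈√(d : ℝ)⌉₊ : ℝ) ^ 2 * log d + d ≤ 5 * d * log d := by
  have hd' : (3 : ℝ) ≤ d := by exact_mod_cast hd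
  have hsqrt : 1 ≤ √(d : ℝ) := one_le_sqrt.2 (by linarith)
  have hlog : 1 ≤ log d := by
    rw [le_log_iff_exp_le (by positivity)]
    linarith [exp_one_lt_d9]
  have hceil : (⌈√(d : ℝ)⌉₊ : ℝ) ^ 2 ≤ 4 * d := calc
    (⌈√(d : ℝ)⌉₊ : ℝ) ^ 2 ≤ (√d + 1) ^ 2 := by
      gcongr
      exact (Nat.ceil_lt_add_one (sqrt_nonneg _)).le
    _ ≤ (2 * √d) ^ 2 := by gcongr; linarith
    _ = 4 * d := by rw [mul_pow, sq_sqrt (Nat.cast_nonneg d)]; ring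
  nlinarith

/-- **Proposition 5.** There is a universal constant `c > 0` such that for every `d ≥ 3`,
`1 ≤ k ≤ d` and every `Y` with `1_d ∈ Y ⊆ {x ∈ {0,1}^d : ‖x‖₁ = k} ∪ {1_d}`,
`(E_η[max_{x∈Y} xᵀη])² ≤ c (k² log d + d)`.  In particular (second conjunct), there is a
universal constant `c > 0` such that for `d ≥ 3`, `k = ⌈√d⌉` and the arm set
`X = {x ∈ {0,1}^d : ‖x‖₁ = k} ∪ {1_d}`, for every `θ*` with nonnegative coordinates
(for which `1_d` is optimal, with gaps `Δ_x = θ*ᵀ(1_d - x)`), and every `ε > 0`, there is a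
probability vector on the sublevel set `X_ε = {x ∈ X : Δ_x ≤ ε}` whose squared Gaussian
width is at most `c · d · log d`; hence `γ̄(A_semi) ≤ c · d · log d`. -/
theorem gaussian_width_topk_plus_allones :
    (∃ c : ℝ, 0 < c ∧
      ∀ (d k : ℕ), 3 ≤ d → 1 ≤ k → k ≤ d →
      ∀ (Y : Finset (Fin d → ℝ)) (h1 : (fun _ => (1 : ℝ)) ∈ Y),
        (∀ x ∈ Y, ((∀ i, x i = 0 ∨ x i = 1) ∧ ∑ i, x i = (k : ℝ)) ∨
          x = fun _ => (1 : ℝ)) →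
        (∫ η, Y.sup' ⟨_, h1⟩ (fun x => ∑ i, x i * η i) ∂ stdGaussian d) ^ 2
          ≤ c * ((k : ℝ) ^ 2 * Real.log d + d)) ∧
    (∃ c : ℝ, 0 < c ∧
      ∀ (d : ℕ), 3 ≤ d →
      ∀ θ : Fin d → ℝ, (∀ i, 0 ≤ θ i) →
      ∀ ε : ℝ, 0 < ε →
      ∃ Y : Finset (Fin d → ℝ),
        (↑Y = {x : Fin d → ℝ |
            ((∀ i, x i = 0 ∨ x i = 1) ∧ ∑ i, x i = ((⌈Real.sqrt d⌉₊ : ℕ) : ℝ)) ∨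
              x = fun _ => (1 : ℝ)} ∩
          {x : Fin d → ℝ | ∑ i, θ i * (1 - x i) ≤ ε}) ∧
        ∃ hY : Y.Nonempty,
        ∃ w : (Fin d → ℝ) → ℝ,
          (∀ x ∈ Y, 0 ≤ w x) ∧ (∑ x ∈ Y, w x = 1) ∧
          (∀ i : Fin d, 0 < ∑ x ∈ Y, w x * x i) ∧
          (∫ η, Y.sup' hY
              (fun x => ∑ i, x i * η i / Real.sqrt (∑ y ∈ Y, w y * y i))
              ∂ stdGaussian d) ^ 2
            ≤ c * (d : ℝ) * Real.log d) := by
  refine ⟨⟨18, by norm_num, fun d k hd hk _ Y h1 hYk =>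
    sq_gaussianWidth_le_of_forall_topK_or_allOnes (by omega) hk h1 hYk⟩, 90, by norm_num,
    fun d hd θ _ ε hε => ?_⟩
  set k := ⌈√(d : ℝ)⌉₊
  set S : Set (Fin d → ℝ) := {x | ((∀ i, x i = 0 ∨ x i = 1) ∧ ∑ i, x i = (k : ℝ)) ∨ x = 1} ∩
    {x | ∑ i, θ i * (1 - x i) ≤ ε}
  have hS : S.Finite := setOf_binary_finite.subset fun x hx => by
    rcases hx.1 with h | rfl
    · exact h.1
    · simp
  have h1 : (1 : Fin d → ℝ) ∈ hS.toFinset := by simp [S, hε.le]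
  have hmass : ∀ i, ∑ y ∈ hS.toFinset, (if y = 1 then 1 else 0) * y i = 1 := by
    simp [ite_mul, h1]
  refine ⟨hS.toFinset, hS.coe_toFinset, ⟨1, h1⟩, fun x => if x = 1 then 1 else 0,
    fun x _ => by positivity, by simp [h1], fun i => (hmass i).symm ▸ one_pos, ?_⟩
  simp only [hmass, sqrt_one, div_one]
  calc _ ≤ 18 * ((k : ℝ) ^ 2 * log d + d) :=
        sq_gaussianWidth_le_of_forall_topK_or_allOnes (by omega)
          (Nat.ceil_pos.2 (by positivity)) h1 fun x hx => ((Set.Finite.mem_toFinset hS).1 hx).1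
    _ ≤ 90 * d * log d := by linarith [natCeil_sqrt_sq_mul_log_add_le hd]
end

section
/- Let d ≥ 1 and let X ⊆ {0,1}^d be a finite set with ∪_{x∈X} supp(x) = {1,…,d}. For a probability vector λ on X with Σ_{x'∈X} λ_{x'} x'_i > 0 for all i ∈ {1,…,d}, write ‖x‖²_{A_semi(λ)^{-1}} = Σ_{i : x_i = 1} ( Σ_{x'∈X} λ_{x'} x'_i )^{-1}. Then: (a) for every such λ, max_{x∈X} ‖x‖²_{A_semi(λ)^{-1}} ≥ d; and (b) there exists such a λ with max_{x∈X} ‖x‖²_{A_semi(λ)^{-1}} ≤ d. Consequently inf_λ max_{x∈X} ‖x‖²_{A_semi(λ)^{-1}} = d. (This is the paper's Proposition 8, a Kiefer–Wolfowitz-type theorem for semi-bandit designs.) -/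
/-!
For `x ∈ {0,1}^d` the design matrix is diagonal with entries `A_i = ∑_y w_y y_i`, so averaging
`‖x‖²_{A⁻¹} = ∑_i x_i / A_i` against `w` gives exactly `d`; hence the maximum is at least `d`.
Since `A = ∑_y w_y • y`, the designs range over the convex hull of `X`; a design maximising
`det A = ∏_i A_i` on this compact convex set has positive entries (the centroid already does), and
the first-order condition `D(det)_A (x - A) ≤ 0` towards any `x ∈ X` reads `∑_i x_i / A_i ≤ d`.
-/

open Finset

theorem Finset.sum_mul_le_sup' {α : Type*} {s : Finset α} (hs : s.Nonempty) (f w : α → ℝ)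
    (hw : ∀ x ∈ s, 0 ≤ w x) (hw₁ : ∑ x ∈ s, w x = 1) : ∑ x ∈ s, w x * f x ≤ s.sup' hs f :=
  calc ∑ x ∈ s, w x * f x ≤ ∑ x ∈ s, w x * s.sup' hs f :=
        sum_le_sum fun x hx => mul_le_mul_of_nonneg_left (le_sup' f hx) (hw x hx)
    _ = s.sup' hs f := by rw [← sum_mul, hw₁, one_mul]

section

variable {ι : Type*}

theorem sum_div_le_card_of_isMaxOn_prod [Fintype ι] {K : Set (ι → ℝ)} (hK : Convex ℝ K)
    {a b : ι → ℝ} (ha : a ∈ K) (hmax : IsMaxOn (fun v => ∏ i, v i) K a) (hpos : ∀ i, 0 < a i)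
    (hb : b ∈ K) : ∑ i, b i / a i ≤ Fintype.card ι := by
  classical
  have hderiv := hmax.localize.hasFDerivWithinAt_nonpos
    (hasFDerivAt_finsetProd (𝕜 := ℝ) (u := univ) (x := a)).hasFDerivWithinAt
    (sub_mem_posTangentConeAt_of_segment_subset (hK.segment_subset ha hb))
  have hP : 0 < ∏ i, a i := prod_pos fun i _ => hpos i
  have herase : ∀ i, ∏ j ∈ univ.erase i, a j = (∏ j, a j) / a i := fun i =>
    eq_div_of_mul_eq (hpos i).ne' (prod_erase_mul _ _ (mem_univ i))
  have key : (∏ i, a i) * (∑ i, b i / a i - Fintype.card ι) ≤ 0 := by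
    convert hderiv using 1
    simp only [FunLike.coe_sum, Finset.sum_apply, FunLike.coe_smul, Pi.smul_apply,
      ContinuousLinearMap.proj_apply, Pi.sub_apply, smul_eq_mul, herase]
    rw [mul_sub, mul_sum, mul_comm, ← nsmul_eq_mul, ← card_univ, ← sum_const, ← sum_sub_distrib]
    refine sum_congr rfl fun i _ => ?_
    field_simp [(hpos i).ne']
  exact sub_nonpos.mp (nonpos_of_mul_nonpos_right key hP)

/-- The diagonal entries of `A_semi(w)`. -/
def semiDesign (X : Finset (ι → ℝ)) (w : (ι → ℝ) → ℝ) (i : ι) : ℝ := ∑ y ∈ X, w y * y i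

theorem semiDesign_eq_sum_smul (X : Finset (ι → ℝ)) (w : (ι → ℝ) → ℝ) (i : ι) :
    semiDesign X w i = (∑ y ∈ X, w y • y) i := by
  simp [semiDesign, Finset.sum_apply]

theorem sum_mul_sum_sq_div_semiDesign [Fintype ι] {X : Finset (ι → ℝ)}
    (hX : ∀ x ∈ X, ∀ i, x i ^ 2 = x i) {w : (ι → ℝ) → ℝ} (hA : ∀ i, semiDesign X w i ≠ 0) :
    ∑ x ∈ X, w x * ∑ i, x i ^ 2 / semiDesign X w i = Fintype.card ι := by
  simp_rw [mul_sum]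
  rw [sum_comm, Fintype.card_eq_sum_ones, Nat.cast_sum, Nat.cast_one]
  refine sum_congr rfl fun i _ => ?_
  calc ∑ x ∈ X, w x * (x i ^ 2 / semiDesign X w i)
      = (∑ x ∈ X, w x * x i) / semiDesign X w i := by
        rw [sum_div]
        exact sum_congr rfl fun x hx => by rw [hX x hx i, mul_div_assoc]
    _ = 1 := div_self (hA i)

theorem exists_isMaxOn_prod_convexHull [Fintype ι] {X : Finset (ι → ℝ)} (hX : X.Nonempty)
    (hnn : ∀ x ∈ X, 0 ≤ x) (hcov : ∀ i, ∃ x ∈ X, 0 < x i) :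
    ∃ a ∈ convexHull ℝ (X : Set (ι → ℝ)),
      IsMaxOn (fun v => ∏ i, v i) (convexHull ℝ ↑X) a ∧ ∀ i, 0 < a i := by
  set c : ι → ℝ := ∑ x ∈ X, (#X : ℝ)⁻¹ • x
  have hc : c ∈ convexHull ℝ (X : Set (ι → ℝ)) := by
    refine mem_convexHull'.mpr ⟨fun _ => (#X : ℝ)⁻¹, fun _ _ => by positivity, ?_, rfl⟩
    rw [sum_const, nsmul_eq_mul, mul_inv_cancel₀ (by exact_mod_cast hX.card_pos.ne')]
  have hc_pos : 0 < ∏ i, c i := prod_pos fun i _ => by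
    obtain ⟨x, hx, hxi⟩ := hcov i
    simp only [c, Finset.sum_apply, Pi.smul_apply, smul_eq_mul, ← mul_sum]
    exact mul_pos (by simpa using hX) (sum_pos' (fun y hy => hnn y hy i) ⟨x, hx, hxi⟩)
  have hcont : Continuous fun v : ι → ℝ => ∏ i, v i := by fun_prop
  obtain ⟨a, ha, hmax⟩ := (X.finite_toSet.isCompact_convexHull ℝ).exists_isMaxOn ⟨c, hc⟩
    hcont.continuousOn
  have ha_nonneg : 0 ≤ a := convexHull_min hnn (convex_Ici 0) ha
  have ha_ne := prod_ne_zero_iff.mp (hc_pos.trans_le (hmax hc)).ne'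
  exact ⟨a, ha, hmax, fun i => (ha_nonneg i).lt_of_ne' (ha_ne i (mem_univ i))⟩

end

theorem kiefer_wolfowitz_semibandit_general (d : ℕ)
    (X : Finset (Fin d → ℝ)) (hX : X.Nonempty)
    (h01 : ∀ x ∈ X, ∀ i, x i = 0 ∨ x i = 1)
    (hcov : ∀ i : Fin d, ∃ x ∈ X, x i = 1) :
    (∀ w : (Fin d → ℝ) → ℝ, (∀ x ∈ X, 0 ≤ w x) → (∑ x ∈ X, w x = 1) →
      (∀ i : Fin d, 0 < ∑ x ∈ X, w x * x i) →
      (d : ℝ) ≤ X.sup' hX (fun x => ∑ i, x i ^ 2 / (∑ y ∈ X, w y * y i))) ∧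
    (∃ w : (Fin d → ℝ) → ℝ, (∀ x ∈ X, 0 ≤ w x) ∧ (∑ x ∈ X, w x = 1) ∧
      (∀ i : Fin d, 0 < ∑ x ∈ X, w x * x i) ∧
      X.sup' hX (fun x => ∑ i, x i ^ 2 / (∑ y ∈ X, w y * y i)) ≤ (d : ℝ)) := by
  have hsq : ∀ x ∈ X, ∀ i, x i ^ 2 = x i := fun x hx i => by
    rcases h01 x hx i with h | h <;> simp [h]
  have hnn : ∀ x ∈ X, 0 ≤ x := fun x hx i => by
    rcases h01 x hx i with h | h <;> simp [h]
  refine ⟨fun w hw hw₁ hA => ?_, ?_⟩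
  · calc (d : ℝ) = ∑ x ∈ X, w x * ∑ i, x i ^ 2 / semiDesign X w i := by
          rw [sum_mul_sum_sq_div_semiDesign hsq fun i => (hA i).ne', Fintype.card_fin]
      _ ≤ _ := X.sum_mul_le_sup' hX _ w hw hw₁
  · obtain ⟨a, ha, hmax, hpos⟩ := exists_isMaxOn_prod_convexHull hX hnn
      fun i => (hcov i).imp fun _ ⟨hx, hxi⟩ => ⟨hx, hxi ▸ one_pos⟩
    obtain ⟨w, hw, hw₁, hwa⟩ := mem_convexHull'.mp ha
    have hA : ∀ i, semiDesign X w i = a i := fun i => by rw [semiDesign_eq_sum_smul, hwa]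
    refine ⟨w, hw, hw₁, fun i => show 0 < semiDesign X w i from hA i ▸ hpos i,
      sup'_le _ _ fun x hx => ?_⟩
    calc ∑ i, x i ^ 2 / semiDesign X w i = ∑ i, x i / a i := by simp only [hsq x hx, hA]
      _ ≤ d := by
        simpa using sum_div_le_card_of_isMaxOn_prod (convex_convexHull ℝ _) ha hmax hpos
          (subset_convexHull ℝ _ hx)

/-- **Proposition 8 (Kiefer–Wolfowitz for semi-bandit designs).** For a finite
`X ⊆ {0,1}^d` covering all coordinates: (a) every probability vector `w` on `X` with
positive design entries satisfies `max_{x∈X} ‖x‖²_{A_semi(w)⁻¹} ≥ d`, and (b) some such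
`w` satisfies `max_{x∈X} ‖x‖²_{A_semi(w)⁻¹} ≤ d`; consequently the infimum equals `d`. -/
theorem kiefer_wolfowitz_semibandit (d : ℕ) (hd : 1 ≤ d)
    (X : Finset (Fin d → ℝ)) (hX : X.Nonempty)
    (h01 : ∀ x ∈ X, ∀ i, x i = 0 ∨ x i = 1)
    (hcov : ∀ i : Fin d, ∃ x ∈ X, x i = 1) :
    (∀ w : (Fin d → ℝ) → ℝ, (∀ x ∈ X, 0 ≤ w x) → (∑ x ∈ X, w x = 1) →
      (∀ i : Fin d, 0 < ∑ x ∈ X, w x * x i) →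
      (d : ℝ) ≤ X.sup' hX (fun x => ∑ i, x i ^ 2 / (∑ y ∈ X, w y * y i))) ∧
    (∃ w : (Fin d → ℝ) → ℝ, (∀ x ∈ X, 0 ≤ w x) ∧ (∑ x ∈ X, w x = 1) ∧
      (∀ i : Fin d, 0 < ∑ x ∈ X, w x * x i) ∧
      X.sup' hX (fun x => ∑ i, x i ^ 2 / (∑ y ∈ X, w y * y i)) ≤ (d : ℝ)) :=
  kiefer_wolfowitz_semibandit_general d X hX h01 hcov
end

section
/- Let m ≥ 1, let Ω ⊆ ℝ^m be a nonempty compact convex set with ℓ₁-diameter at most D (i.e., ‖w − w'‖₁ ≤ D for all w, w' ∈ Ω), and let f : ℝ^m → ℝ be convex and differentiable with ‖∇f(x) − ∇f(y)‖_∞ ≤ L ‖x − y‖₁ for all x, y ∈ ℝ^m. Let w* be a minimizer of f over Ω and set q_r = 2/(r+1). Suppose sequences (w_r)_{r≥1} in Ω, (g_r)_{r≥1} in ℝ^m, and (v_r)_{r≥1} in Ω satisfy, for every r ≥ 1: v_r minimizes v ↦ ⟨g_r, v⟩ over Ω, w_{r+1} = q_r v_r + (1 − q_r) w_r, and ‖g_r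 − ∇f(w_r)‖_∞ ≤ L·D·q_r / 2. Then for every r ≥ 2: f(w_r) − f(w*) ≤ 4 L D² / (r + 2). (This is the deterministic core of the paper's Proposition 14, the convergence guarantee for stochastic Frank–Wolfe, conditioned on the event that all gradient estimates satisfy the stated deviation bound.) -/
/-!
Along the segment from `x` to `y`, the function
`t ↦ f (x + t (y - x)) - t f'(x)(y - x) - (L/2) t² ‖y - x‖₁²` has nonpositive derivative by the
smoothness bound, which gives the descent inequality
`f y ≤ f x + f'(x)(y - x) + (L/2) ‖y - x‖₁²`. Combining it with the first-order convexity
inequality at `w*`, the minimality of `⟨g_r, v_r⟩` and the accuracy of `g_r`, one Frank–Wolfe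
step gives `h_{r+1} ≤ (1 - q_r) h_r + L D² q_r²` for `h_r = f(w_r) - f(w*)`. Since `q_1 = 1`,
this yields `h_2 ≤ L D²`, and induction with `q_r = 2/(r+1)` gives `h_r ≤ 4 L D² / (r + 2)`.
-/

open Set

section

variable {E : Type*} [NormedAddCommGroup E] [NormedSpace ℝ E]

theorem ConvexOn.fderiv_apply_sub_le {s : Set E} {f : E → ℝ} (hf : ConvexOn ℝ s f) {x y : E}
    (hx : x ∈ s) (hy : y ∈ s) (hfx : DifferentiableAt ℝ f x) :
    fderiv ℝ f x (y - x) ≤ f y - f x := by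
  have hline : ConvexOn ℝ (AffineMap.lineMap x y ⁻¹' s) (f ∘ AffineMap.lineMap x y) :=
    hf.comp_affineMap _
  have hderiv : HasDerivAt (f ∘ AffineMap.lineMap x y) (fderiv ℝ f x (y - x)) (0 : ℝ) :=
    hfx.hasFDerivAt.comp_hasDerivAt_of_eq (0 : ℝ) AffineMap.hasDerivAt_lineMap
      (AffineMap.lineMap_apply_zero x y).symm
  simpa [slope_def_field] using
    hline.le_slope_of_hasDerivAt (by simpa using hx) (by simpa using hy) one_pos hderiv

theorem le_add_fderiv_add_half_mul_sq {f : E → ℝ} (hf : Differentiable ℝ f) {p : Seminorm ℝ E}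
    {L : ℝ} (hsmooth : ∀ x y v, |fderiv ℝ f x v - fderiv ℝ f y v| ≤ L * p (x - y) * p v)
    (x y : E) :
    f y ≤ f x + fderiv ℝ f x (y - x) + L / 2 * p (y - x) ^ 2 := by
  set d := y - x
  let φ : ℝ → ℝ := fun t =>
    f (AffineMap.lineMap x y t) - t * fderiv ℝ f x d - L / 2 * p d ^ 2 * t ^ 2
  let φ' : ℝ → ℝ := fun t =>
    fderiv ℝ f (AffineMap.lineMap x y t) d - fderiv ℝ f x d - L * p d ^ 2 * t
  have hφ : ∀ t, HasDerivAt φ (φ' t) t := by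
    intro t
    have hft : HasDerivAt (fun t => f (AffineMap.lineMap x y t))
        (fderiv ℝ f (AffineMap.lineMap x y t) d) t :=
      (hf _).hasFDerivAt.comp_hasDerivAt t AffineMap.hasDerivAt_lineMap
    refine ((hft.sub (hasDerivAt_mul_const (fderiv ℝ f x d))).sub
      ((hasDerivAt_pow 2 t).const_mul (L / 2 * p d ^ 2))).congr_deriv ?_
    simp only [φ']
    ring
  obtain ⟨c, hc, hφc⟩ := exists_hasDerivAt_eq_slope φ φ' one_pos
    (fun t _ => (hφ t).continuousAt.continuousWithinAt) (fun t _ => hφ t)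
  have hφ'c : φ' c ≤ 0 := by
    have hseg : AffineMap.lineMap x y c - x = c • d := by
      rw [AffineMap.lineMap_apply_module', add_sub_cancel_right]
    have hlip := (abs_le.mp (hsmooth (AffineMap.lineMap x y c) x d)).2
    rw [hseg, map_smul_eq_mul, Real.norm_of_nonneg hc.1.le] at hlip
    simp only [φ']
    linarith
  have hφ10 : φ 1 ≤ φ 0 := by
    rw [hφc] at hφ'c
    simpa [sub_nonpos] using hφ'c
  simp only [φ, AffineMap.lineMap_apply_one, AffineMap.lineMap_apply_zero] at hφ10
  linarith

theorem frankWolfe_step_sub_le {p : Seminorm ℝ E} {f : E → ℝ} {L D ε q : ℝ} {Ω : Set E}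
    (hL : 0 ≤ L) (hε : 0 ≤ ε) (hq : 0 ≤ q) (hconv : ConvexOn ℝ univ f)
    (hdiff : Differentiable ℝ f)
    (hsmooth : ∀ x y v, |fderiv ℝ f x v - fderiv ℝ f y v| ≤ L * p (x - y) * p v)
    (hdiam : ∀ u ∈ Ω, ∀ u' ∈ Ω, p (u - u') ≤ D)
    {ℓ : E →ₗ[ℝ] ℝ} {w v wstar : E} (hw : w ∈ Ω) (hv : v ∈ Ω) (hwstar : wstar ∈ Ω)
    (hvmin : ∀ u ∈ Ω, ℓ v ≤ ℓ u) (hdev : ∀ u, |ℓ u - fderiv ℝ f w u| ≤ ε * p u) :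
    f (w + q • (v - w)) - f wstar ≤
      (1 - q) * (f w - f wstar) + q * (ε * D) + L / 2 * (q * D) ^ 2 := by
  have hdescent := le_add_fderiv_add_half_mul_sq hdiff hsmooth w (w + q • (v - w))
  rw [add_sub_cancel_left, map_smul_eq_mul p, Real.norm_of_nonneg hq, map_smul, smul_eq_mul]
    at hdescent
  have hvw : p (v - w) ≤ D := hdiam v hv w hw
  have hgap : fderiv ℝ f w (v - w) ≤ ε * D + (f wstar - f w) := by
    have hsplit : v - w = (v - wstar) + (wstar - w) := by abel
    have hlin : ℓ (v - wstar) ≤ 0 := by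
      rw [map_sub, sub_nonpos]; exact hvmin wstar hwstar
    have horacle : fderiv ℝ f w (v - wstar) ≤ ε * D := by
      have hdev' := (abs_le.mp (hdev (v - wstar))).1
      have hdiam' := mul_le_mul_of_nonneg_left (hdiam v hv wstar hwstar) hε
      linarith
    rw [hsplit, map_add]
    exact add_le_add horacle (hconv.fderiv_apply_sub_le trivial trivial (hdiff w))
  have hsq : (q * p (v - w)) ^ 2 ≤ (q * D) ^ 2 := by
    gcongr
  nlinarith [mul_le_mul_of_nonneg_left hgap hq, mul_le_mul_of_nonneg_left hsq hL]

end

theorem le_four_mul_div_of_recursion {h : ℕ → ℝ} {C : ℝ} (hC : 0 ≤ C)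
    (hrec : ∀ r : ℕ, 1 ≤ r →
      h (r + 1) ≤ (1 - 2 / ((r : ℝ) + 1)) * h r + C * (2 / ((r : ℝ) + 1)) ^ 2) :
    ∀ r : ℕ, 2 ≤ r → h r ≤ 4 * C / ((r : ℝ) + 2) := by
  intro r hr
  induction r, hr using Nat.le_induction with
  | base =>
    have h2 := hrec 1 le_rfl
    norm_num at h2 ⊢
    linarith
  | succ r hr ih =>
    have hr' : (2 : ℝ) ≤ r := by exact_mod_cast hr
    have hq : 0 ≤ 1 - 2 / ((r : ℝ) + 1) := by
      rw [sub_nonneg, div_le_one (by linarith)]; linarith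
    have hslack : 4 * C / ((r : ℝ) + 1 + 2) -
        ((1 - 2 / ((r : ℝ) + 1)) * (4 * C / (r + 2)) + C * (2 / ((r : ℝ) + 1)) ^ 2) =
        4 * C * (r - 1) / ((r + 1) ^ 2 * (r + 2) * (r + 3)) := by
      field_simp
      ring
    have hslack_nonneg : 0 ≤ 4 * C * ((r : ℝ) - 1) / ((r + 1) ^ 2 * (r + 2) * (r + 3)) :=
      div_nonneg (mul_nonneg (by positivity) (by linarith)) (by positivity)
    push_cast
    linarith [hrec r (by omega), mul_le_mul_of_nonneg_left ih hq]

def l1Seminorm (ι : Type*) [Fintype ι] : Seminorm ℝ (ι → ℝ) :=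
  Seminorm.of (fun x => ∑ i, |x i|)
    (fun x y => by
      simpa only [Pi.add_apply, Finset.sum_add_distrib] using
        Finset.sum_le_sum fun i _ => abs_add_le (x i) (y i))
    (fun c x => by
      simp only [Pi.smul_apply, smul_eq_mul, abs_mul, Real.norm_eq_abs, Finset.mul_sum])

theorem frank_wolfe_convergence_general (m : ℕ)
    (Ω : Set (Fin m → ℝ))
    (D L : ℝ) (hD : 0 ≤ D) (hL : 0 ≤ L)
    (hdiam : ∀ u ∈ Ω, ∀ u' ∈ Ω, ∑ i, |u i - u' i| ≤ D)
    (f : (Fin m → ℝ) → ℝ) (hconv : ConvexOn ℝ Set.univ f)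
    (hdiff : Differentiable ℝ f)
    (hsmooth : ∀ x y v : Fin m → ℝ,
      |fderiv ℝ f x v - fderiv ℝ f y v| ≤ L * (∑ i, |x i - y i|) * (∑ i, |v i|))
    (wstar : Fin m → ℝ) (hwstar : wstar ∈ Ω)
    (w g v : ℕ → Fin m → ℝ)
    (hw : ∀ r : ℕ, 1 ≤ r → w r ∈ Ω)
    (hvmem : ∀ r : ℕ, 1 ≤ r → v r ∈ Ω)
    (hvmin : ∀ r : ℕ, 1 ≤ r → ∀ u ∈ Ω, ∑ i, g r i * v r i ≤ ∑ i, g r i * u i)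
    (hupd : ∀ r : ℕ, 1 ≤ r →
      w (r + 1) = fun i => (2 / ((r : ℝ) + 1)) * v r i +
        (1 - 2 / ((r : ℝ) + 1)) * w r i)
    (hdev : ∀ r : ℕ, 1 ≤ r → ∀ u : Fin m → ℝ,
      |(∑ i, g r i * u i) - fderiv ℝ f (w r) u| ≤
        L * D * (2 / ((r : ℝ) + 1)) / 2 * ∑ i, |u i|) :
    ∀ r : ℕ, 2 ≤ r → f (w r) - f wstar ≤ 4 * L * D ^ 2 / ((r : ℝ) + 2) := by
  intro r hr
  rw [mul_assoc]
  refine le_four_mul_div_of_recursion (h := fun r => f (w r) - f wstar)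
    (mul_nonneg hL (sq_nonneg D)) (fun r hr => ?_) r hr
  set q : ℝ := 2 / ((r : ℝ) + 1)
  have hq : 0 ≤ q := by positivity
  have hw_succ : w (r + 1) = w r + q • (v r - w r) := by
    rw [hupd r hr]
    funext i
    simp only [Pi.add_apply, Pi.smul_apply, Pi.sub_apply, smul_eq_mul]
    ring
  have hstep := frankWolfe_step_sub_le (p := l1Seminorm (Fin m))
    (ℓ := dotProductBilin ℝ ℝ (g r)) hL (by positivity) hq hconv hdiff hsmooth hdiam
    (hw r hr) (hvmem r hr) hwstar
    (hvmin r hr) (hdev r hr)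
  rw [← hw_succ] at hstep
  linarith [show q * (L * D * q / 2 * D) + L / 2 * (q * D) ^ 2 = L * D ^ 2 * q ^ 2 by ring]

/-- **Proposition 14 (deterministic core of stochastic Frank–Wolfe).** Let `Ω ⊆ ℝ^m` be
nonempty, compact and convex with `ℓ₁`-diameter at most `D`, and let `f` be convex and
differentiable with `‖∇f(x) - ∇f(y)‖_∞ ≤ L ‖x - y‖₁` (expressed by duality against all
directions `v`). If the iterates satisfy the Frank–Wolfe update with step sizes
`q_r = 2/(r+1)`, where `v_r` minimizes `⟨g_r, ·⟩` over `Ω` and every gradient estimate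
satisfies `‖g_r - ∇f(w_r)‖_∞ ≤ L D q_r / 2`, then `f(w_r) - f(w*) ≤ 4 L D² / (r + 2)`
for all `r ≥ 2`. -/
theorem frank_wolfe_convergence (m : ℕ) (hm : 1 ≤ m)
    (Ω : Set (Fin m → ℝ)) (hΩne : Ω.Nonempty) (hΩcomp : IsCompact Ω)
    (hΩconv : Convex ℝ Ω)
    (D L : ℝ) (hD : 0 ≤ D) (hL : 0 ≤ L)
    (hdiam : ∀ u ∈ Ω, ∀ u' ∈ Ω, ∑ i, |u i - u' i| ≤ D)
    (f : (Fin m → ℝ) → ℝ) (hconv : ConvexOn ℝ Set.univ f)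
    (hdiff : Differentiable ℝ f)
    (hsmooth : ∀ x y v : Fin m → ℝ,
      |fderiv ℝ f x v - fderiv ℝ f y v| ≤ L * (∑ i, |x i - y i|) * (∑ i, |v i|))
    (wstar : Fin m → ℝ) (hwstar : wstar ∈ Ω) (hmin : ∀ u ∈ Ω, f wstar ≤ f u)
    (w g v : ℕ → Fin m → ℝ)
    (hw : ∀ r : ℕ, 1 ≤ r → w r ∈ Ω)
    (hvmem : ∀ r : ℕ, 1 ≤ r → v r ∈ Ω)
    (hvmin : ∀ r : ℕ, 1 ≤ r → ∀ u ∈ Ω, ∑ i, g r i * v r i ≤ ∑ i, g r i * u i)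
    (hupd : ∀ r : ℕ, 1 ≤ r →
      w (r + 1) = fun i => (2 / ((r : ℝ) + 1)) * v r i +
        (1 - 2 / ((r : ℝ) + 1)) * w r i)
    (hdev : ∀ r : ℕ, 1 ≤ r → ∀ u : Fin m → ℝ,
      |(∑ i, g r i * u i) - fderiv ℝ f (w r) u| ≤
        L * D * (2 / ((r : ℝ) + 1)) / 2 * ∑ i, |u i|) :
    ∀ r : ℕ, 2 ≤ r → f (w r) - f wstar ≤ 4 * L * D ^ 2 / ((r : ℝ) + 2) :=
  frank_wolfe_convergence_general m Ω D L hD hL hdiam f hconv hdiff hsmooth wstar hwstar w g v hw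
    hvmem hvmin hupd hdev
end
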